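/- (Key quantitative bound, Lemma 3.4) Let K ≥ 1, and let φ, ψ : [0,∞) → [0,∞) be increasing functions with natural numbers s₀ < s₁ such that: (i) φ⁻¹ and ψ⁻¹ are defined on [min{φ(s₁−s₀), ψ(s₁−s₀)}, ∞); (ii) 2K(ψ⁻¹∘φ)(s−s₀) ≤ (ψ⁻¹∘φ)(s) for all s ≥ s₁; (iii) Σ_{j≥s₁+1} [ ((ψ⁻¹∘φ)(j+1)/(ψ⁻¹∘φ)(j)) · (1/φ(j−s₀)) ]^{1/(N−1)} < ∞. Let u : D → [0,∞) be K-quasi-nearly subharmonic, and fix an integer š₁ ≥ s₁. Then for every x ∈ D and r > 0 with the closed ball B(x,r) ⊆ D, either u(x) ≤ (ψ⁻¹∘φ)(š₁+1), or Φ(u(x)) ≤ (C/r^N) ∫_{B(x,r)} ψ(u(y)) dm_N(y), where C = C(N,K,s₀) and for t with (ψ⁻¹∘φ)(j₀) ≤ t < (ψ⁻¹∘φ)(j₀+1), j₀ ≥ s₁+1, one sets Φ(t) := ( Σ_{j≥j₀} [ ((ψ⁻¹∘φ)(j+1)/(ψ⁻¹∘φ)(j)) / φ(j−s₀) ]^{1/(N−1)}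 )^{1−N}. -/

import Mathlib

/-!
Fix `x`, `r` and the level `j₀` with `g j₀ ≤ u x`; let `ν` be the volume of the unit ball and
`m k` the measure of the part of `B(x, r)` where `g (j₀ + k - s₀) ≤ u < g (j₀ + k + 1)`.
Walk from `x` through balls of radii `ρ k`, the `k`-th one centred at a point where
`u ≥ g (j₀ + k)`. If such a ball contained no point with `u ≥ g (j₀ + k + 1)`, the
sub-mean-value inequality together with (ii) would force
`ν ρ_k ^ N ≤ 2 K (g (j₀ + k + 1) / g (j₀ + k)) m k`. By (ii), `g` at least doubles every `s₀`
steps, whereas `u` is bounded on `B̄(x, r)`; so with radii slightly above these critical values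
the walk leaves `B(x, r)`, i.e. `r ≤ ∑ ρ_k`. Hölder's inequality with exponents `N` and
`N / (N - 1)` then bounds `r` by `(2 K / ν ∑ φ_k m_k) ^ (1/N)` times the `(N - 1)/N`-th power of
the tail of the series in (iii), and `∑ φ_k m_k ≤ (s₀ + 1) ∫ ψ ∘ u`, because
`ψ ∘ u ≥ ψ ∘ g = φ` on the `k`-th band and every value of `u` lies in at most `s₀ + 1` bands.
-/

open MeasureTheory Metric Set

noncomputable def unitBallVol (E : Type*) [NormedAddCommGroup E] [MeasureSpace E] : ℝ :=
  (volume (ball (0 : E) 1)).toReal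

/-- `u` is `K`-quasi-nearly subharmonic n.s. (in the narrow sense) on `D` in dimension `N`:
`u` is measurable, `u⁺` is locally integrable on `D`, and the generalized sub-mean-value
inequality holds for `u` on all closed balls contained in `D`. -/
def IsQNSns {E : Type*} [NormedAddCommGroup E] [MeasureSpace E]
    (N : ℕ) (K : ℝ) (D : Set E) (u : E → ℝ) : Prop :=
  Measurable u ∧ LocallyIntegrableOn (fun x => max (u x) 0) D ∧
  ∀ x : E, ∀ r : ℝ, 0 < r → closedBall x r ⊆ D →
    u x ≤ (K / (unitBallVol E * r ^ N)) * ∫ y in ball x r, u y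

/-- `u` is `K`-quasi-nearly subharmonic on `D`: `u` is measurable, `u⁺` is locally integrable
on `D`, and for every `M ≥ 0` the function `u_M := max {u, -M} + M` satisfies the generalized
sub-mean-value inequality on all closed balls contained in `D`. -/
def IsQNS {E : Type*} [NormedAddCommGroup E] [MeasureSpace E]
    (N : ℕ) (K : ℝ) (D : Set E) (u : E → ℝ) : Prop :=
  Measurable u ∧ LocallyIntegrableOn (fun x => max (u x) 0) D ∧
  ∀ M : ℝ, 0 ≤ M → ∀ x : E, ∀ r : ℝ, 0 < r → closedBall x r ⊆ D →
    max (u x) (-M) + M ≤ (K / (unitBallVol E * r ^ N)) * ∫ y in ball x r, (max (u y) (-M) + M)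

theorem unitBallVol_pos {E : Type*} [NormedAddCommGroup E] [MeasureSpace E] [ProperSpace E]
    [IsFiniteMeasureOnCompacts (volume : Measure E)] [(volume : Measure E).IsOpenPosMeasure] :
    0 < unitBallVol E :=
  ENNReal.toReal_pos (measure_ball_pos _ _ one_pos).ne' measure_ball_lt_top.ne

theorem measureReal_ball_eq_unitBallVol_mul {E : Type*} [NormedAddCommGroup E] [NormedSpace ℝ E]
    [MeasureSpace E] [BorelSpace E] [FiniteDimensional ℝ E] [(volume : Measure E).IsAddHaarMeasure]
    [Nontrivial E] (z : E) {ρ : ℝ} (hρ : 0 ≤ ρ) :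
    volume.real (ball z ρ) = unitBallVol E * ρ ^ Module.finrank ℝ E := by
  rw [measureReal_def, Measure.addHaar_ball _ _ hρ, ENNReal.toReal_mul,
    ENNReal.toReal_ofReal (by positivity), unitBallVol, mul_comm]

theorem MonotoneOn.measurable_comp_of_nonneg {α : Type*} [MeasurableSpace α] {ψ : ℝ → ℝ}
    (hψ : MonotoneOn ψ (Ici 0)) {u : α → ℝ} (hu : Measurable u) (hu0 : ∀ y, 0 ≤ u y) :
    Measurable fun y => ψ (u y) := by
  have hmono : Monotone fun t => ψ (max t 0) := fun t t' htt' =>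
    hψ (le_max_right t 0) (le_max_right t' 0) (max_le_max htt' le_rfl)
  simpa only [Function.comp_def, max_eq_left (hu0 _)] using hmono.measurable.comp hu

namespace IsQNSns

variable {E : Type*} [NormedAddCommGroup E] [MeasureSpace E] {N : ℕ} {K : ℝ} {D : Set E}
  {u : E → ℝ}

theorem integrableOn (hu : IsQNSns N K D u) (hu0 : ∀ y, 0 ≤ u y) {T : Set E} (hT : IsCompact T)
    (hTD : T ⊆ D) : IntegrableOn u T := by
  have hloc := hu.2.1
  simp only [max_eq_left (hu0 _)] at hloc
  exact hloc.integrableOn_compact_subset hTD hT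

theorem bddAbove_image [ProperSpace E] (hu : IsQNSns N K D u) (hu0 : ∀ y, 0 ≤ u y) (hK : 0 ≤ K)
    (hD : IsOpen D) {T : Set E} (hT : IsCompact T) (hTD : T ⊆ D) : BddAbove (u '' T) := by
  obtain ⟨δ, hδ, hδD⟩ := hT.exists_cthickening_subset_open hD hTD
  have hint := hu.integrableOn hu0 hT.cthickening hδD
  refine ⟨K / (unitBallVol E * δ ^ N) * ∫ y in cthickening δ T, u y, ?_⟩
  rintro _ ⟨y, hy, rfl⟩
  have hball : closedBall y δ ⊆ cthickening δ T := closedBall_subset_cthickening hy δ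
  refine (hu.2.2 y δ hδ (hball.trans hδD)).trans (mul_le_mul_of_nonneg_left ?_ ?_)
  · exact setIntegral_mono_set hint (Filter.Eventually.of_forall hu0)
      (ball_subset_closedBall.trans hball).eventuallyLE
  · exact div_nonneg hK (mul_nonneg ENNReal.toReal_nonneg (pow_nonneg hδ.le N))

theorem le_div_measureReal_mul_setIntegral [NormedSpace ℝ E] [BorelSpace E] [FiniteDimensional ℝ E]
    [(volume : Measure E).IsAddHaarMeasure] [Nontrivial E]
    (hu : IsQNSns (Module.finrank ℝ E) K D u) {z : E} {ρ : ℝ} (hρ : 0 < ρ)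
    (hzρ : closedBall z ρ ⊆ D) : u z ≤ K / volume.real (ball z ρ) * ∫ y in ball z ρ, u y := by
  rw [measureReal_ball_eq_unitBallVol_mul z hρ.le]
  exact hu.2.2 z ρ hρ hzρ

end IsQNSns

theorem rpow_one_sub_le_div_pow {A C r : ℝ} {N : ℕ} (hA : 0 < A) (hr : 0 < r)
    (h : r ^ N ≤ C * A ^ ((N : ℝ) - 1)) : A ^ (1 - (N : ℝ)) ≤ C / r ^ N := by
  rw [show (1 : ℝ) - N = -((N : ℝ) - 1) by ring, Real.rpow_neg hA.le, inv_eq_one_div,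
    div_le_div_iff₀ (Real.rpow_pos_of_pos hA _) (by positivity)]
  linarith

theorem card_filter_mem_Ico_le {lo hi : ℕ → ℝ} {p : ℕ} (hsep : ∀ i j, i + p ≤ j → hi i ≤ lo j)
    (s : Finset ℕ) (t : ℝ) : (s.filter fun k => t ∈ Ico (lo k) (hi k)).card ≤ p := by
  set T := s.filter fun k => t ∈ Ico (lo k) (hi k)
  rcases T.eq_empty_or_nonempty with hT | hT
  · simp [hT]
  have hmin := (Finset.mem_filter.mp (T.min'_mem hT)).2
  have hsub : T ⊆ Finset.Ico (T.min' hT) (T.min' hT + p) := fun j hj => by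
    have hjt := (Finset.mem_filter.mp hj).2
    refine Finset.mem_Ico.mpr ⟨T.min'_le j hj, lt_of_not_ge fun hle => ?_⟩
    linarith [hsep _ _ hle, hmin.2, hjt.1]
  simpa using Finset.card_le_card hsub

theorem not_bddAbove_range_of_two_mul_le {f : ℕ → ℝ} {p : ℕ} (hf : ∀ n, 2 * f n ≤ f (n + p))
    (hf0 : 0 < f 0) : ¬BddAbove (range f) := by
  have hgrow : ∀ k : ℕ, 2 ^ k * f 0 ≤ f (k * p) := by
    intro k
    induction k with
    | zero => simp
    | succ k ih =>
      calc 2 ^ (k + 1) * f 0 = 2 * (2 ^ k * f 0) := by ring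
        _ ≤ 2 * f (k * p) := by linarith
        _ ≤ f ((k + 1) * p) := by rw [add_one_mul]; exact hf _
  rintro ⟨M, hM⟩
  obtain ⟨k, hk⟩ := pow_unbounded_of_one_lt (M / f 0) one_lt_two
  rw [div_lt_iff₀ hf0] at hk
  linarith [hgrow k, hM (mem_range_self (k * p))]

/-- Hölder's inequality with exponents `p` and `p / (p - 1)`. -/
theorem sum_mul_rpow_one_div_le {ι : Type*} (s : Finset ι) {p : ℝ} (hp : 1 < p) {x w : ι → ℝ}
    (hx : ∀ i ∈ s, 0 ≤ x i) (hw : ∀ i ∈ s, 0 ≤ w i) :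
    ∑ i ∈ s, (x i * w i) ^ (1 / p) ≤
      (∑ i ∈ s, x i) ^ (1 / p) * (∑ i ∈ s, w i ^ (1 / (p - 1))) ^ ((p - 1) / p) := by
  have hp0 : p ≠ 0 := by positivity
  have hp1 : p - 1 ≠ 0 := by linarith
  have hpq : p.HolderConjugate (p / (p - 1)) :=
    (Real.holderConjugate_iff_eq_conjExponent hp).mpr rfl
  have hsplit : ∀ i ∈ s, (x i * w i) ^ (1 / p) =
      x i ^ (1 / p) * (w i ^ (1 / (p - 1))) ^ ((p - 1) / p) := fun i hi => by
    rw [Real.mul_rpow (hx i hi) (hw i hi), ← Real.rpow_mul (hw i hi)]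
    congr 2
    field_simp
  rw [Finset.sum_congr rfl hsplit]
  convert Real.inner_le_Lp_mul_Lq_of_nonneg s hpq (f := fun i => x i ^ (1 / p))
    (g := fun i => (w i ^ (1 / (p - 1))) ^ ((p - 1) / p))
    (fun i hi => Real.rpow_nonneg (hx i hi) _)
    (fun i hi => Real.rpow_nonneg (Real.rpow_nonneg (hw i hi) _) _) using 3
  · refine Finset.sum_congr rfl fun i hi => ?_
    rw [← Real.rpow_mul (hx i hi), one_div_mul_cancel hp0, Real.rpow_one]
  · refine Finset.sum_congr rfl fun i hi => ?_
    rw [← Real.rpow_mul (Real.rpow_nonneg (hw i hi) _),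
      show (p - 1) / p * (p / (p - 1)) = 1 by field_simp, Real.rpow_one]
  · rw [one_div_div]

theorem not_bddAbove_range_comp_add {K : ℝ} (hK : 1 ≤ K) {g : ℝ → ℝ} {s₀ s₁ j₀ : ℕ}
    (hs : s₁ ≤ j₀) (hgpos : ∀ k : ℕ, 0 < g (j₀ + k))
    (hii : ∀ s : ℝ, (s₁ : ℝ) ≤ s → 2 * K * g (s - s₀) ≤ g s) :
    ¬BddAbove (range fun k : ℕ => g (j₀ + k)) := by
  refine not_bddAbove_range_of_two_mul_le (p := s₀) (fun n => ?_) (hgpos 0)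
  have := hii (j₀ + ↑(n + s₀)) (by exact_mod_cast (by omega : s₁ ≤ j₀ + (n + s₀)))
  simp only [Nat.cast_add, ← add_assoc, add_sub_cancel_right] at this ⊢
  nlinarith [hgpos n]

theorem summable_comp_add_of_le {f : ℝ → ℝ} {a b : ℕ} (hab : a ≤ b)
    (h : Summable fun j : ℕ => f (a + j)) : Summable fun j : ℕ => f (b + j) := by
  obtain ⟨q, rfl⟩ := Nat.exists_eq_add_of_le hab
  refine ((summable_nat_add_iff q).mpr h).congr fun j => ?_
  push_cast; ring_nf

section Chains

variable {X : Type*} [PseudoMetricSpace X] {x : X} {r : ℝ} {ρ : ℕ → ℝ}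

theorem exists_dist_le_sum_range {P : ℕ → X → Prop} (h0 : P 0 x)
    (hstep : ∀ k z, P k z → dist z x + ρ k ≤ r → ∃ z' ∈ ball z (ρ k), P (k + 1) z')
    (hρ : ∀ n, ∑ k ∈ Finset.range n, ρ k ≤ r) (n : ℕ) :
    ∃ z, P n z ∧ dist z x ≤ ∑ k ∈ Finset.range n, ρ k := by
  induction n with
  | zero => exact ⟨x, h0, by simp⟩
  | succ n ih =>
    obtain ⟨z, hz, hzx⟩ := ih
    have hnext := hρ (n + 1)
    rw [Finset.sum_range_succ] at hnext ⊢
    obtain ⟨z', hz'z, hz'⟩ := hstep n z hz (by linarith)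
    exact ⟨z', hz', (dist_triangle z' z x).trans (by linarith [mem_ball.mp hz'z])⟩

theorem exists_lt_sum_of_forall_exists_mem_ball {u : X → ℝ} {G : ℕ → ℝ}
    (hbdd : BddAbove (u '' closedBall x r)) (hG : ¬BddAbove (range G)) (h0 : G 0 ≤ u x)
    (hstep : ∀ k z, G k ≤ u z → dist z x + ρ k ≤ r → ∃ z' ∈ ball z (ρ k), G (k + 1) ≤ u z') :
    ∃ n, r < ∑ k ∈ Finset.range n, ρ k := by
  by_contra! hρ
  obtain ⟨M, hM⟩ := hbdd
  obtain ⟨_, ⟨n, rfl⟩, hn⟩ := not_bddAbove_iff.mp hG M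
  obtain ⟨z, hz, hzx⟩ := exists_dist_le_sum_range (P := fun k z => G k ≤ u z) h0 hstep hρ n
  linarith [hM (mem_image_of_mem u (mem_closedBall.mpr (hzx.trans (hρ n))))]

end Chains

section Integrals

variable {α : Type*} [MeasurableSpace α] {μ : Measure α}

open Classical in
theorem sum_setIntegral_le_mul_integral {ι : Type*} {f : α → ℝ} (hf : Integrable f μ)
    (hf0 : 0 ≤ f) {S : ι → Set α} (hS : ∀ i, MeasurableSet (S i)) (s : Finset ι) {n : ℕ}
    (hn : ∀ y, (s.filter fun i => y ∈ S i).card ≤ n) :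
    ∑ i ∈ s, ∫ y in S i, f y ∂μ ≤ n * ∫ y, f y ∂μ := by
  simp_rw [← integral_indicator (hS _)]
  rw [← integral_finsetSum s fun i _ => hf.indicator (hS i), ← integral_const_mul]
  refine integral_mono (integrable_finsetSum s fun i _ => hf.indicator (hS i))
    (hf.const_mul _) fun y => ?_
  rw [Finset.sum_indicator_eq_sum_filter, Finset.sum_const, nsmul_eq_mul]
  exact mul_le_mul_of_nonneg_right (by exact_mod_cast hn y) (hf0 y)

theorem sum_mul_measureReal_preimage_Ico_le [IsFiniteMeasure μ] {u f : α → ℝ} (hu : Measurable u)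
    (hf : Integrable f μ) (hf0 : 0 ≤ f) {lo hi Φ : ℕ → ℝ} {p : ℕ}
    (hsep : ∀ i j, i + p ≤ j → hi i ≤ lo j) (hΦ : ∀ k y, lo k ≤ u y → Φ k ≤ f y)
    (s : Finset ℕ) :
    ∑ k ∈ s, Φ k * μ.real (u ⁻¹' Ico (lo k) (hi k)) ≤ p * ∫ y, f y ∂μ := by
  have hmeas : ∀ k, MeasurableSet (u ⁻¹' Ico (lo k) (hi k)) := fun k => hu measurableSet_Ico
  refine le_trans (Finset.sum_le_sum fun k _ => ?_)
    (sum_setIntegral_le_mul_integral hf hf0 hmeas s fun y => by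
      convert card_filter_mem_Ico_le hsep s (u y) using 4; rfl)
  rw [mul_comm, ← smul_eq_mul, ← setIntegral_const]
  exact setIntegral_mono_on (integrableOn_const (measure_ne_top _ _)) hf.integrableOn (hmeas k)
    fun y hy => hΦ k y hy.1

theorem mul_measureReal_le_of_forall_lt {B : Set α} (hB : MeasurableSet B) (hμB : μ B ≠ ⊤)
    {u : α → ℝ} (hu : Measurable u) (hint : IntegrableOn u B μ) {K a b c : ℝ} (hK : 0 ≤ K)
    (ha : 0 ≤ a) (hmean : b ≤ K / μ.real B * ∫ y in B, u y ∂μ) (hKa : 2 * K * a ≤ b)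
    (hlt : ∀ y ∈ B, u y < c) : b * μ.real B ≤ 2 * K * c * μ.real ({y | a ≤ u y} ∩ B) := by
  set F := {y | a ≤ u y}
  have hF : MeasurableSet F := measurableSet_le measurable_const hu
  rcases measureReal_nonneg.eq_or_lt with hB0 | hB0
  · rw [← hB0, mul_zero, measureReal_mono_null inter_subset_right hB0.symm hμB, mul_zero]
  have hle : ∫ y in B, u y ∂μ ≤ a * μ.real B + c * μ.real (F ∩ B) := by
    have hconst : IntegrableOn (fun _ => a) B μ := integrableOn_const hμB
    have hind : IntegrableOn (F.indicator fun _ => c) B μ :=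
      (integrableOn_const hμB).indicator hF
    calc ∫ y in B, u y ∂μ ≤ ∫ y in B, (a + F.indicator (fun _ => c) y) ∂μ := by
          refine setIntegral_mono_on hint (hconst.add hind) hB fun y hy => ?_
          by_cases hyF : y ∈ F
          · rw [indicator_of_mem hyF]; linarith [hlt y hy, show a ≤ u y from hyF]
          · rw [indicator_of_notMem hyF]; linarith [not_le.mp (show ¬a ≤ u y from hyF)]
      _ = a * μ.real B + c * μ.real (F ∩ B) := by
          rw [integral_add hconst hind, setIntegral_const, integral_indicator_const _ hF,
            measureReal_restrict_apply hF, smul_eq_mul, smul_eq_mul, mul_comm, mul_comm _ c]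
  have hmean' : b * μ.real B ≤ K * ∫ y in B, u y ∂μ := by
    rwa [div_mul_eq_mul_div, le_div_iff₀ hB0] at hmean
  nlinarith [mul_le_mul_of_nonneg_right hKa hB0.le, mul_le_mul_of_nonneg_left hle hK]

end Integrals

section Bands

variable {α : Type*} [MeasurableSpace α] {μ : Measure α} {u : α → ℝ} {ψ : ℝ → ℝ}

theorem MonotoneOn.integrableOn_comp (hψ : MonotoneOn ψ (Ici 0))
    (hψ0 : ∀ s, 0 ≤ s → 0 ≤ ψ s) (hu : Measurable u) (hu0 : ∀ y, 0 ≤ u y) {s : Set α}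
    (hs : MeasurableSet s) (hμs : μ s ≠ ⊤) (hbdd : BddAbove (u '' s)) :
    IntegrableOn (fun y => ψ (u y)) s μ := by
  obtain ⟨M, hM⟩ := hbdd
  refine Integrable.mono' (integrableOn_const hμs (C := ψ M))
    (hψ.measurable_comp_of_nonneg hu hu0).aestronglyMeasurable
    ((ae_restrict_iff' hs).mpr (Filter.Eventually.of_forall fun y hy => ?_))
  have huy : u y ≤ M := hM (mem_image_of_mem u hy)
  rw [Real.norm_eq_abs, abs_of_nonneg (hψ0 _ (hu0 y))]
  exact hψ (hu0 y) ((hu0 y).trans huy) huy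

theorem sum_mul_measureReal_preimage_Ico_le_integral_comp [IsFiniteMeasure μ]
    (hu : Measurable u) (hu0 : ∀ y, 0 ≤ u y) (hψ : MonotoneOn ψ (Ici 0))
    (hψ0 : ∀ s, 0 ≤ s → 0 ≤ ψ s) (hψu : Integrable (fun y => ψ (u y)) μ) {φ g : ℝ → ℝ}
    (hg : MonotoneOn g (Ici 0)) {t : ℝ} (ht : 0 ≤ t) {s₀ : ℕ}
    (hg0 : ∀ k : ℕ, 0 ≤ g (t + k - s₀)) (hψg : ∀ k : ℕ, ψ (g (t + k - s₀)) = φ (t + k - s₀))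
    (n : ℕ) :
    ∑ k ∈ Finset.range n, φ (t + k - s₀) * μ.real (u ⁻¹' Ico (g (t + k - s₀)) (g (t + k + 1))) ≤
      (s₀ + 1) * ∫ y, ψ (u y) ∂μ := by
  have hsep : ∀ i j : ℕ, i + (s₀ + 1) ≤ j → g (t + i + 1) ≤ g (t + j - s₀) := fun i j hij => by
    have : (i : ℝ) + 1 + s₀ ≤ j := by exact_mod_cast (by omega : i + 1 + s₀ ≤ j)
    exact hg (by simp only [mem_Ici]; positivity) (by simp only [mem_Ici]; linarith) (by linarith)
  exact_mod_cast sum_mul_measureReal_preimage_Ico_le hu hψu (fun y => hψ0 _ (hu0 y)) hsep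
    (fun k y hy => hψg k ▸ hψ (hg0 k) ((hg0 k).trans hy) hy) (Finset.range n)

end Bands

section ChainEstimate

variable {E : Type*} [NormedAddCommGroup E] [NormedSpace ℝ E] [FiniteDimensional ℝ E]
  [MeasureSpace E] [BorelSpace E] [(volume : Measure E).IsAddHaarMeasure] [Nontrivial E]
  {K : ℝ} {D : Set E} {u : E → ℝ} {x : E} {r : ℝ} {lo G : ℕ → ℝ}

theorem exists_lt_sum_radii (hu : IsQNSns (Module.finrank ℝ E) K D u) (hu0 : ∀ y, 0 ≤ u y)
    (hK : 0 ≤ K) (hD : IsOpen D) (hxr : closedBall x r ⊆ D) (hGunb : ¬BddAbove (range G))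
    (hlo : ∀ k, 0 ≤ lo k) (hKlo : ∀ k, 2 * K * lo k ≤ G k) (hx : G 0 ≤ u x) {ρ : ℕ → ℝ}
    (hρ : ∀ k, 0 < ρ k)
    (hρbig : ∀ k, 2 * K * G (k + 1) *
      (volume.restrict (ball x r)).real (u ⁻¹' Ico (lo k) (G (k + 1))) <
        G k * (unitBallVol E * ρ k ^ Module.finrank ℝ E)) :
    ∃ n, r < ∑ k ∈ Finset.range n, ρ k := by
  have hmeas : Measurable u := hu.1
  refine exists_lt_sum_of_forall_exists_mem_ball
    (hu.bddAbove_image hu0 hK hD (isCompact_closedBall x r) hxr) hGunb hx fun k z hz hzx => ?_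
  by_contra! hlt
  have hsub : closedBall z (ρ k) ⊆ closedBall x r := closedBall_subset_closedBall' (by linarith)
  have hmean := hu.le_div_measureReal_mul_setIntegral (hρ k) (hsub.trans hxr)
  have hfill := mul_measureReal_le_of_forall_lt measurableSet_ball measure_ball_lt_top.ne hmeas
    ((hu.integrableOn hu0 (isCompact_closedBall z (ρ k)) (hsub.trans hxr)).mono_set
      ball_subset_closedBall) hK (hlo k) (hz.trans hmean) (hKlo k) hlt
  have hband : volume.real ({y | lo k ≤ u y} ∩ ball z (ρ k)) ≤
      (volume.restrict (ball x r)).real (u ⁻¹' Ico (lo k) (G (k + 1))) := by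
    rw [measureReal_restrict_apply (hmeas measurableSet_Ico)]
    exact measureReal_mono (fun y ⟨hy, hyz⟩ => ⟨⟨hy, hlt y hyz⟩, ball_subset_ball'
      (by linarith) hyz⟩) (measure_ne_top_of_subset inter_subset_right measure_ball_lt_top.ne)
  have hG1 : 0 ≤ 2 * K * G (k + 1) :=
    mul_nonneg (by positivity) ((mul_nonneg (by positivity) (hlo (k + 1))).trans (hKlo (k + 1)))
  rw [measureReal_ball_eq_unitBallVol_mul z (hρ k).le] at hfill
  linarith [hρbig k, mul_le_mul_of_nonneg_left hband hG1]

theorem le_of_forall_sum_critical_radii_le (hu : IsQNSns (Module.finrank ℝ E) K D u)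
    (hu0 : ∀ y, 0 ≤ u y) (hK : 0 ≤ K) (hD : IsOpen D) (hxr : closedBall x r ⊆ D)
    (hGunb : ¬BddAbove (range G)) (hlo : ∀ k, 0 ≤ lo k) (hKlo : ∀ k, 2 * K * lo k ≤ G k)
    (hx : G 0 ≤ u x) (hG : ∀ k, 0 < G k) {c : ℕ → ℝ} (hc : ∀ k, 0 ≤ c k)
    (hcrit : ∀ k, 2 * K * G (k + 1) *
      (volume.restrict (ball x r)).real (u ⁻¹' Ico (lo k) (G (k + 1))) ≤
        G k * (unitBallVol E * c k ^ Module.finrank ℝ E))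
    {R : ℝ} (hR : ∀ n, ∑ k ∈ Finset.range n, c k ≤ R) : r ≤ R := by
  have hd : Module.finrank ℝ E ≠ 0 := Module.finrank_pos.ne'
  refine le_of_forall_pos_lt_add fun ε hε => ?_
  obtain ⟨n, hn⟩ := exists_lt_sum_radii (ρ := fun k => c k + ε / 2 * (1 / 2) ^ k) hu hu0 hK hD
    hxr hGunb hlo hKlo hx (fun k => by have := hc k; positivity) fun k =>
      (hcrit k).trans_lt (mul_lt_mul_of_pos_left (mul_lt_mul_of_pos_left (pow_lt_pow_left₀
        (by linarith [show 0 < ε / 2 * (1 / 2 : ℝ) ^ k by positivity]) (hc k) hd)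
        unitBallVol_pos) (hG k))
  calc r < ∑ k ∈ Finset.range n, (c k + ε / 2 * (1 / 2) ^ k) := hn
    _ = ∑ k ∈ Finset.range n, c k + ε / 2 * ∑ k ∈ Finset.range n, (1 / 2 : ℝ) ^ k := by
      rw [Finset.sum_add_distrib, Finset.mul_sum]
    _ ≤ R + ε := by nlinarith [sum_geometric_two_le n, hR n]

theorem pow_finrank_le_of_summable (hu : IsQNSns (Module.finrank ℝ E) K D u)
    (hu0 : ∀ y, 0 ≤ u y) (hK : 0 ≤ K) (hD : IsOpen D) (hr : 0 ≤ r) (hxr : closedBall x r ⊆ D)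
    (hGunb : ¬BddAbove (range G)) (hlo : ∀ k, 0 ≤ lo k) (hKlo : ∀ k, 2 * K * lo k ≤ G k)
    (hx : G 0 ≤ u x) (hd : 1 < Module.finrank ℝ E) (hG : ∀ k, 0 < G k) {Φ : ℕ → ℝ}
    (hΦ : ∀ k, 0 < Φ k) {B : ℝ}
    (hB : ∀ n, ∑ k ∈ Finset.range n,
      Φ k * (volume.restrict (ball x r)).real (u ⁻¹' Ico (lo k) (G (k + 1))) ≤ B)
    (hsum : Summable fun k => (G (k + 1) / G k / Φ k) ^ (1 / ((Module.finrank ℝ E : ℝ) - 1))) :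
    r ^ Module.finrank ℝ E ≤ 2 * K / unitBallVol E * B *
      (∑' k, (G (k + 1) / G k / Φ k) ^ (1 / ((Module.finrank ℝ E : ℝ) - 1))) ^
        ((Module.finrank ℝ E : ℝ) - 1) := by
  set d := Module.finrank ℝ E
  set ν := unitBallVol E
  set m := fun k => (volume.restrict (ball x r)).real (u ⁻¹' Ico (lo k) (G (k + 1)))
  set w := fun k => G (k + 1) / G k / Φ k
  set A := ∑' k, w k ^ (1 / ((d : ℝ) - 1))
  set X := 2 * K / ν * B
  have hν : 0 < ν := unitBallVol_pos
  have hd' : (1 : ℝ) < d := by exact_mod_cast hd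
  have hw : ∀ k, 0 ≤ w k := fun k => by have := hG k; have := hG (k + 1); have := hΦ k; positivity
  have hxk : ∀ k, 0 ≤ 2 * K / ν * (Φ k * m k) := fun k => by have := hΦ k; positivity
  have hX : 0 ≤ X := by have := hB 0; simp only [Finset.sum_range_zero] at this; positivity
  have hA : 0 ≤ A := tsum_nonneg fun k => Real.rpow_nonneg (hw k) _
  set c := fun k => (2 * K / ν * (Φ k * m k) * w k) ^ (1 / (d : ℝ))
  have hcrit : ∀ k, 2 * K * G (k + 1) * m k ≤ G k * (ν * c k ^ d) := fun k => by
    have := hG k; have := hΦ k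
    simp only [c, one_div]
    rw [Real.rpow_inv_natCast_pow (mul_nonneg (hxk k) (hw k)) (by omega)]
    refine le_of_eq ?_
    simp only [w]
    field_simp
  have hHolder : ∀ n, ∑ k ∈ Finset.range n, c k ≤ X ^ (1 / (d : ℝ)) * A ^ (((d : ℝ) - 1) / d) :=
    fun n => by
    refine (sum_mul_rpow_one_div_le _ hd' (fun k _ => hxk k) fun k _ => hw k).trans ?_
    refine mul_le_mul (Real.rpow_le_rpow (Finset.sum_nonneg fun k _ => hxk k) ?_ (by positivity))
      (Real.rpow_le_rpow (Finset.sum_nonneg fun k _ => Real.rpow_nonneg (hw k) _)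
        (hsum.sum_le_tsum _ fun k _ => Real.rpow_nonneg (hw k) _) (by positivity))
      (Real.rpow_nonneg (Finset.sum_nonneg fun k _ => Real.rpow_nonneg (hw k) _) _)
      (Real.rpow_nonneg hX _)
    rw [← Finset.mul_sum]
    exact mul_le_mul_of_nonneg_left (hB n) (by positivity)
  calc r ^ d ≤ (X ^ (1 / (d : ℝ)) * A ^ (((d : ℝ) - 1) / d)) ^ d :=
        pow_le_pow_left₀ hr (le_of_forall_sum_critical_radii_le hu hu0 hK hD hxr hGunb hlo hKlo
          hx hG (fun k => Real.rpow_nonneg (mul_nonneg (hxk k) (hw k)) _) hcrit hHolder) d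
    _ = X * A ^ ((d : ℝ) - 1) := by
      rw [mul_pow, one_div, Real.rpow_inv_natCast_pow hX (by omega), ← Real.rpow_natCast,
        ← Real.rpow_mul hA, div_mul_cancel₀ _ (by positivity)]

theorem pow_finrank_le_integral_mul_tsum (hd : 1 < Module.finrank ℝ E) (hK : 1 ≤ K)
    (hD : IsOpen D) {s₀ s₁ : ℕ} {φ ψ g : ℝ → ℝ} (hψmono : MonotoneOn ψ (Ici 0))
    (hψ0 : ∀ s, 0 ≤ s → 0 ≤ ψ s) (hφpos : ∀ s : ℝ, (s₁ : ℝ) - s₀ ≤ s → 0 < φ s)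
    (hgmono : MonotoneOn g (Ici 0)) (hgpos : ∀ s : ℝ, (s₁ : ℝ) - s₀ ≤ s → 0 < g s)
    (hψg : ∀ s : ℝ, (s₁ : ℝ) - s₀ ≤ s → ψ (g s) = φ s)
    (hii : ∀ s : ℝ, (s₁ : ℝ) ≤ s → 2 * K * g (s - s₀) ≤ g s) (hu0 : ∀ y, 0 ≤ u y)
    (hu : IsQNSns (Module.finrank ℝ E) K D u) (hr : 0 < r)
    (hxr : closedBall x r ⊆ D) {j₀ : ℕ} (hj₀ : s₁ ≤ j₀) (hx : g j₀ ≤ u x)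
    (hsum : Summable fun k : ℕ => (g (j₀ + k + 1) / g (j₀ + k) / φ (j₀ + k - s₀)) ^
      (1 / ((Module.finrank ℝ E : ℝ) - 1))) :
    r ^ Module.finrank ℝ E ≤ 2 * K / unitBallVol E * ((s₀ + 1) * ∫ y in ball x r, ψ (u y)) *
      (∑' k : ℕ, (g (j₀ + k + 1) / g (j₀ + k) / φ (j₀ + k - s₀)) ^
        (1 / ((Module.finrank ℝ E : ℝ) - 1))) ^ ((Module.finrank ℝ E : ℝ) - 1) := by
  have : IsFiniteMeasure (volume.restrict (ball x r)) :=
    isFiniteMeasure_restrict.mpr measure_ball_lt_top.ne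
  have hj : ∀ k : ℕ, (s₁ : ℝ) ≤ j₀ + k := fun k => by exact_mod_cast (by omega : s₁ ≤ j₀ + k)
  have hG : ∀ k : ℕ, 0 < g (j₀ + k) := fun k =>
    hgpos _ (by linarith [hj k, s₀.cast_nonneg (α := ℝ)])
  have hlo : ∀ k : ℕ, 0 < g (j₀ + k - s₀) := fun k => hgpos _ (by linarith [hj k])
  have hbands := sum_mul_measureReal_preimage_Ico_le_integral_comp hu.1 hu0 hψmono hψ0
    (hψmono.integrableOn_comp hψ0 hu.1 hu0 measurableSet_ball (measure_ball_lt_top (μ := volume)).ne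
      ((hu.bddAbove_image hu0 (by linarith) hD (isCompact_closedBall x r) hxr).mono
        (image_mono ball_subset_closedBall)))
    hgmono j₀.cast_nonneg (fun k => (hlo k).le) (fun k => hψg _ (by linarith [hj k]))
  simpa only [Nat.cast_add, Nat.cast_one, ← add_assoc] using
    pow_finrank_le_of_summable (G := fun k : ℕ => g (j₀ + k)) hu hu0 (by linarith) hD hr.le hxr
      (not_bddAbove_range_comp_add hK hj₀ hG hii) (fun k => (hlo k).le)
      (fun k => hii _ (hj k)) (by simpa using hx) hd hG (fun k => hφpos _ (by linarith [hj k]))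
      (fun n => by simpa only [Nat.cast_add, Nat.cast_one, ← add_assoc] using hbands n)
      (by simpa only [Nat.cast_add, Nat.cast_one, ← add_assoc] using hsum)

end ChainEstimate

theorem stmt_8_general {N : ℕ} (hN : 2 ≤ N) {K : ℝ} (hK : 1 ≤ K)
    (D : Set (EuclideanSpace ℝ (Fin N))) (hDo : IsOpen D)
    (s₀ s₁ : ℕ)
    (φ ψ : ℝ → ℝ) (hψmono : MonotoneOn ψ (Set.Ici 0))
    (hψ0 : ∀ s : ℝ, 0 ≤ s → 0 ≤ ψ s)
    (hφpos : ∀ s : ℝ, (s₁ : ℝ) - s₀ ≤ s → 0 < φ s)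
    -- `g = ψ⁻¹ ∘ φ` : `g` is increasing, nonnegative, positive from `s₁ − s₀` on,
    -- and `ψ ∘ g = φ` on `[s₁ − s₀, ∞)` (this encodes hypothesis (i))
    (g : ℝ → ℝ) (hgmono : MonotoneOn g (Set.Ici 0))
    (hgpos : ∀ s : ℝ, (s₁ : ℝ) - s₀ ≤ s → 0 < g s)
    (hψg : ∀ s : ℝ, (s₁ : ℝ) - s₀ ≤ s → ψ (g s) = φ s)
    -- hypothesis (ii)
    (hii : ∀ s : ℝ, (s₁ : ℝ) ≤ s → 2 * K * g (s - s₀) ≤ g s)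
    -- hypothesis (iii)
    (hiii : Summable (fun j : ℕ =>
      (g ((s₁ : ℝ) + 1 + j + 1) / g ((s₁ : ℝ) + 1 + j) / φ ((s₁ : ℝ) + 1 + j - s₀)) ^
        ((1 : ℝ) / (N - 1))))
    (u : EuclideanSpace ℝ (Fin N) → ℝ) (hu0 : ∀ x, 0 ≤ u x)
    (hu : IsQNSns N K D u)
    (t₁ : ℕ) :
    ∃ C : ℝ, 0 < C ∧
      ∀ x : EuclideanSpace ℝ (Fin N), ∀ r : ℝ, 0 < r → closedBall x r ⊆ D →
        u x ≤ g ((t₁ : ℝ) + 1) ∨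
        ∀ j₀ : ℕ, s₁ + 1 ≤ j₀ → g (j₀ : ℝ) ≤ u x → u x < g ((j₀ : ℝ) + 1) →
          (∑' j : ℕ,
              (g ((j₀ : ℝ) + j + 1) / g ((j₀ : ℝ) + j) / φ ((j₀ : ℝ) + j - s₀)) ^
                ((1 : ℝ) / (N - 1))) ^ (1 - (N : ℝ))
            ≤ C / r ^ N * ∫ y in ball x r, ψ (u y) := by
  have : NeZero N := ⟨by omega⟩
  have hdim : Module.finrank ℝ (EuclideanSpace ℝ (Fin N)) = N := finrank_euclideanSpace_fin
  have hν := unitBallVol_pos (E := EuclideanSpace ℝ (Fin N))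
  refine ⟨2 * K * (s₀ + 1) / unitBallVol (EuclideanSpace ℝ (Fin N)), by positivity,
    fun x r hr hxr => Or.inr fun j₀ hj₀ hx _ => ?_⟩
  have hsum := summable_comp_add_of_le (f := fun s => (g (s + 1) / g s / φ (s - s₀)) ^
    ((1 : ℝ) / (N - 1))) hj₀ (by simpa using hiii)
  have hj : ∀ k : ℕ, (s₁ : ℝ) - s₀ ≤ j₀ + k - s₀ := fun k => by
    have : (s₁ : ℝ) ≤ j₀ + k := by exact_mod_cast (by omega : s₁ ≤ j₀ + k)
    linarith
  have hj' : ∀ k : ℕ, (s₁ : ℝ) - s₀ ≤ j₀ + k := fun k => by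
    linarith [hj k, s₀.cast_nonneg (α := ℝ)]
  have hterm : ∀ k : ℕ,
      0 < (g (j₀ + k + 1) / g (j₀ + k) / φ (j₀ + k - s₀)) ^ ((1 : ℝ) / (N - 1)) := fun k =>
    Real.rpow_pos_of_pos (div_pos (div_pos (hgpos _ (by linarith [hj' k])) (hgpos _ (hj' k)))
      (hφpos _ (hj k))) _
  have key := pow_finrank_le_integral_mul_tsum (by omega) hK hDo hψmono hψ0 hφpos hgmono hgpos
    hψg hii hu0 (by rwa [hdim]) hr hxr (by omega) hx (by simpa only [hdim] using hsum)
  rw [hdim] at key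
  calc _ ≤ _ := rpow_one_sub_le_div_pow (hsum.tsum_pos (fun k => (hterm k).le) 0 (hterm 0)) hr key
    _ = _ := by ring

/-- key quantitative bound, Lemma 3.4. Here `g` plays the role of
`ψ⁻¹ ∘ φ` (this is expressed by the hypothesis `ψ (g s) = φ s`). Under the hypotheses
(i) (encoded via `g`), (ii) and (iii) of Lemma 3.4, for every `x ∈ D` and `r > 0` with
`closedBall x r ⊆ D`, either `u x ≤ g (t₁ + 1)` or
`Φ (u x) ≤ (C / r^N) ∫_{B(x,r)} ψ (u y) dy`, where `C = C(N, K, s₀)` and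
`Φ (t) = (∑_{j ≥ j₀} [ (g (j+1) / g j) / φ (j − s₀) ]^{1/(N−1)})^{1−N}` for
`g j₀ ≤ t < g (j₀ + 1)`, `j₀ ≥ s₁ + 1`. -/
theorem stmt_8 {N : ℕ} (hN : 2 ≤ N) {K : ℝ} (hK : 1 ≤ K)
    (D : Set (EuclideanSpace ℝ (Fin N))) (hDo : IsOpen D) (hDc : IsConnected D)
    (s₀ s₁ : ℕ) (hs : s₀ < s₁)
    (φ ψ : ℝ → ℝ) (hφmono : MonotoneOn φ (Set.Ici 0)) (hψmono : MonotoneOn ψ (Set.Ici 0))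
    (hφ0 : ∀ s : ℝ, 0 ≤ s → 0 ≤ φ s) (hψ0 : ∀ s : ℝ, 0 ≤ s → 0 ≤ ψ s)
    (hφpos : ∀ s : ℝ, (s₁ : ℝ) - s₀ ≤ s → 0 < φ s)
    -- `g = ψ⁻¹ ∘ φ` : `g` is increasing, nonnegative, positive from `s₁ − s₀` on,
    -- and `ψ ∘ g = φ` on `[s₁ − s₀, ∞)` (this encodes hypothesis (i))
    (g : ℝ → ℝ) (hgmono : MonotoneOn g (Set.Ici 0)) (hg0 : ∀ s : ℝ, 0 ≤ s → 0 ≤ g s)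
    (hgpos : ∀ s : ℝ, (s₁ : ℝ) - s₀ ≤ s → 0 < g s)
    (hψg : ∀ s : ℝ, (s₁ : ℝ) - s₀ ≤ s → ψ (g s) = φ s)
    -- hypothesis (ii)
    (hii : ∀ s : ℝ, (s₁ : ℝ) ≤ s → 2 * K * g (s - s₀) ≤ g s)
    -- hypothesis (iii)
    (hiii : Summable (fun j : ℕ =>
      (g ((s₁ : ℝ) + 1 + j + 1) / g ((s₁ : ℝ) + 1 + j) / φ ((s₁ : ℝ) + 1 + j - s₀)) ^
        ((1 : ℝ) / (N - 1))))
    (u : EuclideanSpace ℝ (Fin N) → ℝ) (hu0 : ∀ x, 0 ≤ u x)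
    (hu : IsQNSns N K D u)
    (t₁ : ℕ) (ht₁ : s₁ ≤ t₁) :
    ∃ C : ℝ, 0 < C ∧
      ∀ x : EuclideanSpace ℝ (Fin N), ∀ r : ℝ, 0 < r → closedBall x r ⊆ D →
        u x ≤ g ((t₁ : ℝ) + 1) ∨
        ∀ j₀ : ℕ, s₁ + 1 ≤ j₀ → g (j₀ : ℝ) ≤ u x → u x < g ((j₀ : ℝ) + 1) →
          (∑' j : ℕ,
              (g ((j₀ : ℝ) + j + 1) / g ((j₀ : ℝ) + j) / φ ((j₀ : ℝ) + j - s₀)) ^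
                ((1 : ℝ) / (N - 1))) ^ (1 - (N : ℝ))
            ≤ C / r ^ N * ∫ y in ball x r, ψ (u y) :=
  stmt_8_general hN hK D hDo s₀ s₁ φ ψ hψmono hψ0 hφpos g hgmono hgpos hψg hii hiii u hu0 hu t₁
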